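/- Shannon entropy decomposition: assume all the integrals below exist, and for c ∈ ℝ write S₁(𝟙{W ≤ c}·W) = −∫_{−∞}^{c} g(w)·log g(w) dw. Then the Shannon entropy S₁(X) = −∫_ℝ f(x; θ)·log f(x; θ) dx of X ~ TD(θ) equals log(Z_θ) − ((ρ+δ)σ/Z_θ)·E[log(ρ + δ·T(W; α, p))] − (δσ/Z_θ)·{ E[𝟙{W ≤ −α√Y}·log(ρ + δ·T(W; α, p))] − E[𝟙{W ≤ α√Y}·log(ρ + δ·T(W; α, p))] } + ((ρ+δ)σ/Z_θ)·S₁(W) + (δσ/Z_θ)·{ E[S₁(𝟙{W ≤ −α√Y}·W)] − E[S₁(𝟙{W ≤ α√Y}·W)] }, where S₁(W) = −∫_ℝ g(w)·log g(w) dw and E[S₁(𝟙{W ≤ ±α√Y}·W)] = ∫₀^∞ S₁(𝟙{W ≤ ±α√y}·W)·y^{p−1}e^{−y}/Γ(p) dy. -/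

import Mathlib

open MeasureTheory Real Set Filter

noncomputable def lincGamma (p u : ℝ) : ℝ := ∫ w in (0:ℝ)..u, w ^ (p - 1) * Real.exp (-w)

noncomputable def Tfun (p α x : ℝ) : ℝ := lincGamma p (x ^ 2 / α ^ 2) / Real.Gamma p

noncomputable def gammaPDF (p y : ℝ) : ℝ := y ^ (p - 1) * Real.exp (-y) / Real.Gamma p

noncomputable def Znorm (p σ α ρ δ : ℝ) (g : ℝ → ℝ) : ℝ :=
  σ * ∫ w : ℝ, (ρ + δ * Tfun p α w) * g w

noncomputable def tdPDF (p μ σ α ρ δ : ℝ) (g : ℝ → ℝ) (x : ℝ) : ℝ :=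
  (1 / Znorm p σ α ρ δ g) * (ρ + δ * Tfun p α ((x - μ) / σ)) * g ((x - μ) / σ)

noncomputable def cdfOf (d : ℝ → ℝ) (x : ℝ) : ℝ := ∫ t in Iic x, d t

/-!
With `h = ρ + δ T` and the substitution `w = (x - μ) / σ`, the integrand `f log f` becomes
`(h (log h) g + h g log g - (log Z) h g) / Z`, so everything reduces to integrals `∫ h q` with
`q ∈ L¹`. Since `T(w) = P(Y ≤ w² / α²) = P(α √Y ≤ |w|)` for `Y ~ Gamma(p, 1)`, Fubini gives
`∫ T q = E[∫_{w ≤ -α√Y} q] + ∫ q - E[∫_{w ≤ α√Y} q]`.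
-/

section Fubini

variable {X Y : Type*} [MeasurableSpace X] [MeasurableSpace Y] {μ : Measure X} {ν : Measure Y}
  {S : Set (X × Y)} {q : X → ℝ} {γ : Y → ℝ}

lemma integral_indicator_mul_left (hS : MeasurableSet S) (y : Y) :
    ∫ x, S.indicator (fun z => q z.1 * γ z.2) (x, y) ∂μ =
      (∫ x in {x | (x, y) ∈ S}, q x ∂μ) * γ y := by
  rw [← integral_mul_const,
    ← integral_indicator (s := {x | (x, y) ∈ S}) (measurable_prodMk_right hS)]
  rfl

lemma integral_indicator_mul_right (hS : MeasurableSet S) (x : X) :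
    ∫ y, S.indicator (fun z => q z.1 * γ z.2) (x, y) ∂ν =
      (∫ y in {y | (x, y) ∈ S}, γ y ∂ν) * q x := by
  rw [mul_comm, ← integral_const_mul,
    ← integral_indicator (s := {y | (x, y) ∈ S}) (measurable_prodMk_left hS)]
  rfl

variable [SFinite μ] [SFinite ν]

lemma integrable_setIntegral_section_mul (hS : MeasurableSet S) (hq : Integrable q μ)
    (hγ : Integrable γ ν) :
    Integrable (fun y => (∫ x in {x | (x, y) ∈ S}, q x ∂μ) * γ y) ν := by
  simpa only [integral_indicator_mul_left hS] using
    ((hq.mul_prod hγ).indicator hS).integral_prod_right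

lemma integral_setIntegral_section_mul_comm (hS : MeasurableSet S) (hq : Integrable q μ)
    (hγ : Integrable γ ν) :
    ∫ x, (∫ y in {y | (x, y) ∈ S}, γ y ∂ν) * q x ∂μ =
      ∫ y, (∫ x in {x | (x, y) ∈ S}, q x ∂μ) * γ y ∂ν := by
  simpa only [integral_indicator_mul_left hS, integral_indicator_mul_right hS] using
    integral_integral_swap (f := fun x y => S.indicator (fun z => q z.1 * γ z.2) (x, y))
      ((hq.mul_prod hγ).indicator hS)

end Fubini

lemma le_sq_div_sq_iff {α y w : ℝ} (hα : 0 < α) (hy : 0 ≤ y) :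
    y ≤ w ^ 2 / α ^ 2 ↔ α * √y ≤ |w| := by
  rw [le_div_iff₀ (by positivity), ← sq_le_sq₀ (by positivity) (abs_nonneg w), mul_pow,
    sq_sqrt hy, sq_abs, mul_comm]

lemma setIntegral_le_abs {q : ℝ → ℝ} (hq : Integrable q) {a : ℝ} (ha : 0 < a) :
    ∫ w in {w | a ≤ |w|}, q w = (∫ w in Iic (-a), q w) + (∫ w, q w) - ∫ w in Iic a, q w := by
  have hset : {w : ℝ | a ≤ |w|} = Iic (-a) ∪ Ici a := by
    ext w
    simp only [mem_ofPred_eq, mem_union, mem_Iic, mem_Ici, le_abs']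
  have hdisj : Disjoint (Iic (-a)) (Ici a) := Iic_disjoint_Ici.2 (by linarith)
  have hcompl := integral_add_compl (measurableSet_Iio (a := a)) hq
  rw [compl_Iio, ← integral_Iic_eq_integral_Iio] at hcompl
  rw [hset, setIntegral_union hdisj measurableSet_Ici hq.integrableOn hq.integrableOn]
  linarith

lemma integral_comp_sub_div (F : ℝ → ℝ) (μ : ℝ) {σ : ℝ} (hσ : 0 < σ) :
    ∫ x, F ((x - μ) / σ) = σ * ∫ w, F w := by
  rw [integral_sub_right_eq_self (fun x => F (x / σ)) μ, Measure.integral_comp_div,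
    abs_of_pos hσ, smul_eq_mul]

-- No side conditions: if `Z`, `a` or `b` vanishes, both sides are `0` (`1 / 0 = 0`, `log 0 = 0`).
lemma one_div_mul_mul_mul_log (Z a b : ℝ) :
    1 / Z * a * b * log (1 / Z * a * b) =
      (a * (log a * b) + a * (b * log b) - log Z * (a * b)) / Z := by
  rcases eq_or_ne Z 0 with rfl | hZ
  · simp
  rcases eq_or_ne a 0 with rfl | ha
  · simp
  rcases eq_or_ne b 0 with rfl | hb
  · simp
  rw [log_mul (by positivity) hb, log_mul (by positivity) ha, one_div, log_inv]
  field_simp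
  ring

section Kernel

variable {p : ℝ}

lemma gammaPDF_nonneg (hp : 0 < p) {y : ℝ} (hy : 0 ≤ y) : 0 ≤ gammaPDF p y :=
  div_nonneg (mul_nonneg (rpow_nonneg hy _) (exp_pos _).le) (Gamma_pos_of_pos hp).le

lemma integrableOn_gammaPDF (hp : 0 < p) : IntegrableOn (gammaPDF p) (Ioi 0) := by
  unfold gammaPDF
  have h := (GammaIntegral_convergent hp).div_const (Gamma p)
  simp only [mul_comm (exp _)] at h
  exact h

lemma setIntegral_gammaPDF_Ioi (hp : 0 < p) : ∫ y in Ioi 0, gammaPDF p y = 1 := by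
  simp only [gammaPDF, integral_div, mul_comm _ (exp _), ← Gamma_eq_integral hp]
  exact div_self (Gamma_pos_of_pos hp).ne'

lemma Tfun_eq_setIntegral_gammaPDF (α w : ℝ) :
    Tfun p α w = ∫ y in Ioc 0 (w ^ 2 / α ^ 2), gammaPDF p y := by
  unfold gammaPDF
  rw [Tfun, lincGamma, intervalIntegral.integral_of_le (by positivity), integral_div]

lemma monotone_setIntegral_gammaPDF_Ioc (hp : 0 < p) :
    Monotone fun u => ∫ y in Ioc 0 u, gammaPDF p y := fun _ _ huv =>
  setIntegral_mono_set ((integrableOn_gammaPDF hp).mono_set Ioc_subset_Ioi_self)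
    (ae_restrict_of_forall_mem measurableSet_Ioc fun _ hy => gammaPDF_nonneg hp hy.1.le)
    (Ioc_subset_Ioc_right huv).eventuallyLE

lemma Tfun_nonneg (hp : 0 < p) (α w : ℝ) : 0 ≤ Tfun p α w := by
  rw [Tfun_eq_setIntegral_gammaPDF]
  exact setIntegral_nonneg measurableSet_Ioc fun _ hy => gammaPDF_nonneg hp hy.1.le

lemma Tfun_le_one (hp : 0 < p) (α w : ℝ) : Tfun p α w ≤ 1 := by
  rw [Tfun_eq_setIntegral_gammaPDF, ← setIntegral_gammaPDF_Ioi hp]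
  exact setIntegral_mono_set (integrableOn_gammaPDF hp)
    (ae_restrict_of_forall_mem measurableSet_Ioi fun _ hy => gammaPDF_nonneg hp (le_of_lt hy))
    Ioc_subset_Ioi_self.eventuallyLE

lemma measurable_Tfun (hp : 0 < p) (α : ℝ) : Measurable (Tfun p α) := by
  simp_rw [funext (Tfun_eq_setIntegral_gammaPDF α)]
  exact (monotone_setIntegral_gammaPDF_Ioc hp).measurable.comp (by fun_prop)

lemma integrable_Tfun_mul (hp : 0 < p) (α : ℝ) {q : ℝ → ℝ} (hq : Integrable q) :
    Integrable fun w => Tfun p α w * q w :=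
  hq.bdd_mul (measurable_Tfun hp α).aestronglyMeasurable (ae_of_all _ fun w => by
    rw [norm_of_nonneg (Tfun_nonneg hp α w)]; exact Tfun_le_one hp α w)

lemma integrable_add_mul_Tfun_mul (hp : 0 < p) (α ρ δ : ℝ) {q : ℝ → ℝ} (hq : Integrable q) :
    Integrable fun w => (ρ + δ * Tfun p α w) * q w := by
  refine ((hq.const_mul ρ).fun_add ((integrable_Tfun_mul hp α hq).const_mul δ)).congr
    (ae_of_all _ fun w => ?_)
  ring

lemma integral_Tfun_mul (hp : 0 < p) {α : ℝ} (hα : 0 < α) {q : ℝ → ℝ} (hq : Integrable q) :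
    ∫ w, Tfun p α w * q w =
      (∫ y in Ioi 0, (∫ w in Iic (-α * √y), q w) * gammaPDF p y) + (∫ w, q w)
        - ∫ y in Ioi 0, (∫ w in Iic (α * √y), q w) * gammaPDF p y := by
  have hγ : Integrable (gammaPDF p) (volume.restrict (Ioi 0)) := integrableOn_gammaPDF hp
  have hS : MeasurableSet {z : ℝ × ℝ | z.2 ≤ z.1 ^ 2 / α ^ 2} :=
    measurableSet_le (by fun_prop) (by fun_prop)
  have hT (w : ℝ) : Tfun p α w = ∫ y in Iic (w ^ 2 / α ^ 2), gammaPDF p y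
      ∂(volume.restrict (Ioi 0)) := by
    rw [Measure.restrict_restrict measurableSet_Iic, Iic_inter_Ioi, Tfun_eq_setIntegral_gammaPDF]
  have hsection (y : ℝ) (hy : y ∈ Ioi 0) : ∫ w in {w | y ≤ w ^ 2 / α ^ 2}, q w =
      (∫ w in Iic (-α * √y), q w) + (∫ w, q w) - ∫ w in Iic (α * √y), q w := by
    simp only [le_sq_div_sq_iff hα (le_of_lt hy)]
    rw [setIntegral_le_abs hq (mul_pos hα (sqrt_pos.2 hy)), neg_mul]
  have hint {c : ℝ → ℝ} (hc : Measurable c) :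
      Integrable (fun y => (∫ w in Iic (c y), q w) * gammaPDF p y) (volume.restrict (Ioi 0)) :=
    integrable_setIntegral_section_mul (S := {z | z.1 ≤ c z.2})
      (measurableSet_le measurable_fst (hc.comp measurable_snd)) hq hγ
  have hminus := hint (c := fun y => -α * √y) (by fun_prop)
  have hplus := hint (c := fun y => α * √y) (by fun_prop)
  calc ∫ w, Tfun p α w * q w
      = ∫ y in Ioi 0, (∫ w in {w | y ≤ w ^ 2 / α ^ 2}, q w) * gammaPDF p y := by
        simp_rw [hT]
        exact integral_setIntegral_section_mul_comm hS hq hγ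
    _ = ∫ y in Ioi 0, ((∫ w in Iic (-α * √y), q w) * gammaPDF p y + (∫ w, q w) * gammaPDF p y
          - (∫ w in Iic (α * √y), q w) * gammaPDF p y) :=
        setIntegral_congr_fun measurableSet_Ioi fun y hy => by rw [hsection y hy]; ring
    _ = _ := by
        rw [integral_sub (hminus.fun_add (hγ.const_mul _)) hplus,
          integral_add hminus (hγ.const_mul _), integral_const_mul, setIntegral_gammaPDF_Ioi hp,
          mul_one]

lemma integral_add_mul_Tfun_mul (hp : 0 < p) {α : ℝ} (hα : 0 < α) (ρ δ : ℝ) {q : ℝ → ℝ}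
    (hq : Integrable q) :
    ∫ w, (ρ + δ * Tfun p α w) * q w =
      (ρ + δ) * (∫ w, q w) + δ *
        ((∫ y in Ioi 0, (∫ w in Iic (-α * √y), q w) * gammaPDF p y)
          - ∫ y in Ioi 0, (∫ w in Iic (α * √y), q w) * gammaPDF p y) := by
  simp only [add_mul, mul_assoc]
  rw [integral_add (hq.const_mul ρ) ((integrable_Tfun_mul hp α hq).const_mul δ),
    integral_const_mul, integral_const_mul, integral_Tfun_mul hp hα hq]
  ring

end Kernel

lemma integral_tdPDF_mul_log (p μ α ρ δ : ℝ) (g : ℝ → ℝ) {σ : ℝ} (hσ : 0 < σ) :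
    ∫ x, tdPDF p μ σ α ρ δ g x * log (tdPDF p μ σ α ρ δ g x) =
      σ * ∫ w, ((ρ + δ * Tfun p α w) * (log (ρ + δ * Tfun p α w) * g w)
        + (ρ + δ * Tfun p α w) * (g w * log (g w))
        - log (Znorm p σ α ρ δ g) * ((ρ + δ * Tfun p α w) * g w)) / Znorm p σ α ρ δ g := by
  rw [← integral_comp_sub_div _ μ hσ]
  simp only [tdPDF, one_div_mul_mul_mul_log]

theorem stmt11_general (p μ σ α ρ δ : ℝ) (hp : 0 < p) (hσ : 0 < σ) (hα : 0 < α)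
    (g : ℝ → ℝ) (hgi : Integrable g)
    (hint2 : Integrable (fun w : ℝ => Real.log (ρ + δ * Tfun p α w) * g w))
    (hint3 : Integrable (fun w : ℝ => g w * Real.log (g w))) :
    (-∫ x : ℝ, tdPDF p μ σ α ρ δ g x * Real.log (tdPDF p μ σ α ρ δ g x))
      = Real.log (Znorm p σ α ρ δ g)
        - ((ρ + δ) * σ / Znorm p σ α ρ δ g)
            * (∫ w : ℝ, Real.log (ρ + δ * Tfun p α w) * g w)
        - (δ * σ / Znorm p σ α ρ δ g) *
            ((∫ y in Ioi (0:ℝ),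
                (∫ w in Iic (-α * Real.sqrt y), Real.log (ρ + δ * Tfun p α w) * g w)
                  * gammaPDF p y)
              - (∫ y in Ioi (0:ℝ),
                  (∫ w in Iic (α * Real.sqrt y), Real.log (ρ + δ * Tfun p α w) * g w)
                    * gammaPDF p y))
        + ((ρ + δ) * σ / Znorm p σ α ρ δ g)
            * (-∫ w : ℝ, g w * Real.log (g w))
        + (δ * σ / Znorm p σ α ρ δ g) *
            ((∫ y in Ioi (0:ℝ),
                (-∫ w in Iic (-α * Real.sqrt y), g w * Real.log (g w)) * gammaPDF p y)
              - (∫ y in Ioi (0:ℝ),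
                  (-∫ w in Iic (α * Real.sqrt y), g w * Real.log (g w)) * gammaPDF p y)) := by
  have hZ : σ * ∫ w, (ρ + δ * Tfun p α w) * g w = Znorm p σ α ρ δ g := rfl
  have hlogh := integrable_add_mul_Tfun_mul hp α ρ δ hint2
  have hlogg := integrable_add_mul_Tfun_mul hp α ρ δ hint3
  have hg := integrable_add_mul_Tfun_mul hp α ρ δ hgi
  rw [integral_tdPDF_mul_log p μ α ρ δ g hσ, integral_div,
    integral_sub (hlogh.fun_add hlogg) (hg.const_mul _), integral_add hlogh hlogg, integral_const_mul,
    integral_add_mul_Tfun_mul hp hα ρ δ hint2, integral_add_mul_Tfun_mul hp hα ρ δ hint3]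
  simp only [neg_mul, integral_neg]
  generalize Znorm p σ α ρ δ g = Z at hZ ⊢
  rcases eq_or_ne Z 0 with hZ0 | hZ0
  · -- the junk case `1 / 0 = 0`, `log 0 = 0`: both sides vanish
    simp [hZ0]
  field_simp
  linear_combination (log Z) * hZ

/-- Shannon entropy decomposition for the trimodal distribution. -/
theorem stmt11 (p μ σ α ρ δ : ℝ) (hp : 0 < p) (hσ : 0 < σ) (hα : 0 < α)
    (hρ : 0 ≤ ρ) (hδ : 0 ≤ δ) (hρδ : 0 < ρ + δ)
    (g : ℝ → ℝ) (hg0 : ∀ x, 0 ≤ g x) (hgm : Measurable g)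
    (hgi : Integrable g) (hg1 : (∫ x : ℝ, g x) = 1)
    (hint1 : Integrable (fun x : ℝ =>
        tdPDF p μ σ α ρ δ g x * Real.log (tdPDF p μ σ α ρ δ g x)))
    (hint2 : Integrable (fun w : ℝ => Real.log (ρ + δ * Tfun p α w) * g w))
    (hint3 : Integrable (fun w : ℝ => g w * Real.log (g w)))
    (hint4 : IntegrableOn (fun y : ℝ =>
        (∫ w in Iic (-α * Real.sqrt y), Real.log (ρ + δ * Tfun p α w) * g w)
          * gammaPDF p y) (Ioi 0))
    (hint5 : IntegrableOn (fun y : ℝ =>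
        (∫ w in Iic (α * Real.sqrt y), Real.log (ρ + δ * Tfun p α w) * g w)
          * gammaPDF p y) (Ioi 0))
    (hint6 : IntegrableOn (fun y : ℝ =>
        (-∫ w in Iic (-α * Real.sqrt y), g w * Real.log (g w)) * gammaPDF p y) (Ioi 0))
    (hint7 : IntegrableOn (fun y : ℝ =>
        (-∫ w in Iic (α * Real.sqrt y), g w * Real.log (g w)) * gammaPDF p y) (Ioi 0)) :
    (-∫ x : ℝ, tdPDF p μ σ α ρ δ g x * Real.log (tdPDF p μ σ α ρ δ g x))
      = Real.log (Znorm p σ α ρ δ g)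
        - ((ρ + δ) * σ / Znorm p σ α ρ δ g)
            * (∫ w : ℝ, Real.log (ρ + δ * Tfun p α w) * g w)
        - (δ * σ / Znorm p σ α ρ δ g) *
            ((∫ y in Ioi (0:ℝ),
                (∫ w in Iic (-α * Real.sqrt y), Real.log (ρ + δ * Tfun p α w) * g w)
                  * gammaPDF p y)
              - (∫ y in Ioi (0:ℝ),
                  (∫ w in Iic (α * Real.sqrt y), Real.log (ρ + δ * Tfun p α w) * g w)
                    * gammaPDF p y))
        + ((ρ + δ) * σ / Znorm p σ α ρ δ g)
            * (-∫ w : ℝ, g w * Real.log (g w))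
        + (δ * σ / Znorm p σ α ρ δ g) *
            ((∫ y in Ioi (0:ℝ),
                (-∫ w in Iic (-α * Real.sqrt y), g w * Real.log (g w)) * gammaPDF p y)
              - (∫ y in Ioi (0:ℝ),
                  (-∫ w in Iic (α * Real.sqrt y), g w * Real.log (g w)) * gammaPDF p y)) :=
  stmt11_general p μ σ α ρ δ hp hσ hα g hgi hint2 hint3
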